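/- Let G be a finite group of even order, let I ⊂ ℤG be the augmentation ideal and (I,2) = ker(ℤG → ℤ/2) the ideal generated by I and 2. Then the Tate homology group Ĥ_0(G; (ℤG/N) ⊗_ℤ (I,2)), where N = Σ_{g∈G} g, is cyclic of order 2, generated by the class of 1 ⊗ N. -/

import Mathlib

open TensorProduct

section Coinvariants
variable {G : Type*} [Group G] {V : Type*} [AddCommGroup V] [Module ℤ V]

/-- The norm map `v ↦ ∑ g • v` for a representation of a finite group. -/
noncomputable def normMap [Fintype G] (ρ : Representation ℤ G V) : V →ₗ[ℤ] V :=
  ∑ g : G, (ρ g : V →ₗ[ℤ] V)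

/-- The submodule generated by the elements `g • v - v`, so that the quotient of `V` by it is
the module of coinvariants `ℤ ⊗_{ℤG} V`. -/
def coinvRel (ρ : Representation ℤ G V) : Submodule ℤ V :=
  Submodule.span ℤ (Set.range fun p : G × V => ρ p.1 p.2 - p.2)

/-- The coinvariants `ℤ ⊗_{ℤG} V` of a representation. -/
abbrev Coinv (ρ : Representation ℤ G V) : Type _ := V ⧸ coinvRel ρ

lemma coinvRel_le [Fintype G] (ρ : Representation ℤ G V) :
    coinvRel ρ ≤ LinearMap.ker (normMap ρ) := by
  rw [coinvRel, Submodule.span_le]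
  rintro x ⟨⟨g, v⟩, rfl⟩
  have key : (normMap ρ) ((ρ g) v) = (normMap ρ) v := by
    simp only [normMap, LinearMap.sum_apply]
    calc ∑ h : G, (ρ h) ((ρ g) v)
        = ∑ h : G, (ρ (h * g)) v := by
          refine Finset.sum_congr rfl fun h _ => ?_
          rw [map_mul]; rfl
      _ = ∑ h : G, (ρ h) v :=
          Fintype.sum_bijective (· * g) (Group.mulRight_bijective g) _ _ fun x => rfl
  simp only [SetLike.mem_coe, LinearMap.mem_ker, map_sub, key, sub_self]

/-- The norm map `ℤ ⊗_{ℤG} V → V`, `1 ⊗ v ↦ ∑ g • v`, induced on the coinvariants.  Its kernel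
is the Tate homology group `Ĥ₀(G; V)` (the codomain restriction to the invariants `V^G` does not
change the kernel). -/
noncomputable def normBar [Fintype G] (ρ : Representation ℤ G V) :
    @LinearMap ℤ ℤ _ _ (RingHom.id ℤ) (Coinv ρ) V _ _ (Submodule.Quotient.module (coinvRel ρ)) _ :=
  Submodule.liftQ (coinvRel ρ) (normMap ρ) (coinvRel_le ρ)

end Coinvariants

section SubQuot
variable {G : Type*} [Group G] {V : Type*} [AddCommGroup V] [Module ℤ V]

/-- The restriction of a representation to an invariant submodule. -/
def subRep (ρ : Representation ℤ G V) (p : Submodule ℤ V)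
    (hp : ∀ g : G, ∀ x ∈ p, ρ g x ∈ p) : Representation ℤ G p where
  toFun g := (ρ g).restrict (hp g)
  map_one' := by
    ext x
    simp [LinearMap.restrict_apply]
  map_mul' g h := by
    ext x
    simp [LinearMap.restrict_apply, map_mul]

/-- The representation induced on the quotient by an invariant submodule. -/
noncomputable def quotRep (ρ : Representation ℤ G V) (p : Submodule ℤ V)
    (hp : ∀ g : G, ∀ x ∈ p, ρ g x ∈ p) : Representation ℤ G (V ⧸ p) where
  toFun g := Submodule.mapQ p p (ρ g) (hp g)
  map_one' := by
    apply LinearMap.ext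
    intro x
    obtain ⟨v, rfl⟩ := Submodule.Quotient.mk_surjective p x
    simp [Submodule.mapQ_apply]
  map_mul' g h := by
    apply LinearMap.ext
    intro x
    obtain ⟨v, rfl⟩ := Submodule.Quotient.mk_surjective p x
    simp [Submodule.mapQ_apply, map_mul]

end SubQuot

section GroupRing
variable (G : Type*) [Group G]

/-- The left regular representation of `G` on the group ring `ℤG`. -/
noncomputable def regRep : Representation ℤ G (MonoidAlgebra ℤ G) where
  toFun g := LinearMap.mulLeft ℤ (MonoidAlgebra.of ℤ G g)
  map_one' := by
    apply LinearMap.ext; intro x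
    simp [MonoidAlgebra.of_apply, ← MonoidAlgebra.one_def]
  map_mul' g h := by
    apply LinearMap.ext; intro x
    simp only [MonoidAlgebra.of_apply, LinearMap.mulLeft_apply, Module.End.mul_apply]
    rw [← mul_assoc, MonoidAlgebra.single_mul_single, mul_one]

/-- The augmentation map `ε : ℤG → ℤ`. -/
noncomputable def aug : MonoidAlgebra ℤ G →ₐ[ℤ] ℤ := MonoidAlgebra.lift ℤ ℤ G 1

/-- The augmentation ideal `I = ker(ε : ℤG → ℤ)`. -/
noncomputable def augI : Ideal (MonoidAlgebra ℤ G) := RingHom.ker (aug G).toRingHom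

/-- The mod 2 augmentation map `ℤG → ℤ/2`. -/
noncomputable def aug2 : MonoidAlgebra ℤ G →+* ZMod 2 :=
  (Int.castRingHom (ZMod 2)).comp (aug G).toRingHom

/-- The ideal `(I, 2) = ker(ℤG → ℤ/2)` generated by the augmentation ideal and `2`. -/
noncomputable def I2 : Ideal (MonoidAlgebra ℤ G) := RingHom.ker (aug2 G)

/-- The norm element `N = ∑_{g ∈ G} g ∈ ℤG`. -/
noncomputable def Nelt [Fintype G] : MonoidAlgebra ℤ G := ∑ g : G, MonoidAlgebra.of ℤ G g

/-- The (left) ideal of `ℤG` generated by the norm element `N`; the quotient by it is `ℤG/N`. -/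
noncomputable def NIdeal [Fintype G] : Ideal (MonoidAlgebra ℤ G) := Ideal.span {Nelt G}

/-- The left ideal `(N, 2)` of `ℤG` generated by the norm element `N` and `2`. -/
noncomputable def N2 [Fintype G] : Ideal (MonoidAlgebra ℤ G) := Ideal.span {Nelt G, 2}

lemma aug_single (g : G) : aug G (MonoidAlgebra.single g 1) = 1 := by
  simp [aug, MonoidAlgebra.lift_single]

lemma of_sub_one_mem_augI (g : G) :
    MonoidAlgebra.of ℤ G g - 1 ∈ (augI G).restrictScalars ℤ := by
  simp [augI, RingHom.mem_ker, map_sub, aug_single]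

lemma of_sub_one_mem_I2 (g : G) :
    MonoidAlgebra.of ℤ G g - 1 ∈ (I2 G).restrictScalars ℤ := by
  simp [I2, aug2, RingHom.mem_ker, map_sub, aug_single]

lemma two_mem_I2 : (2 : MonoidAlgebra ℤ G) ∈ (I2 G).restrictScalars ℤ := by
  have : (aug2 G) 2 = 2 := by simp [map_ofNat]
  simp [I2, RingHom.mem_ker, this]
  decide

lemma N_mem_I2 [Fintype G] (h : Even (Fintype.card G)) :
    Nelt G ∈ (I2 G).restrictScalars ℤ := by
  have : (aug2 G) (Nelt G) = (Fintype.card G : ZMod 2) := by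
    simp [Nelt, map_sum, aug2, aug_single]
  simp only [Submodule.restrictScalars_mem, I2, RingHom.mem_ker, this]
  rw [ZMod.natCast_eq_zero_iff]
  exact h.two_dvd

lemma N_mem_N2 [Fintype G] : Nelt G ∈ (N2 G).restrictScalars ℤ :=
  Ideal.subset_span (by simp)

lemma two_mem_N2 [Fintype G] : (2 : MonoidAlgebra ℤ G) ∈ (N2 G).restrictScalars ℤ :=
  Ideal.subset_span (by simp)

lemma ideal_invariant (J : Ideal (MonoidAlgebra ℤ G)) :
    ∀ g : G, ∀ x ∈ J.restrictScalars ℤ, (regRep G) g x ∈ J.restrictScalars ℤ := by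
  intro g x hx
  exact J.mul_mem_left _ hx

/-- A (left) ideal of `ℤG`, regarded as a representation of `G`. -/
noncomputable def idealRep (J : Ideal (MonoidAlgebra ℤ G)) :
    Representation ℤ G ↥(J.restrictScalars ℤ) :=
  subRep (regRep G) (J.restrictScalars ℤ) (ideal_invariant G J)

/-- The quotient `ℤG/N` of `ℤG` by the ideal generated by the norm element, as a
representation of `G`. -/
noncomputable def quotNRep [Fintype G] :
    Representation ℤ G (MonoidAlgebra ℤ G ⧸ (NIdeal G).restrictScalars ℤ) :=
  quotRep (regRep G) ((NIdeal G).restrictScalars ℤ) (ideal_invariant G (NIdeal G))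

/-- `2` as an element of `(I,2)`. -/
noncomputable def twoI2 : ↥((I2 G).restrictScalars ℤ) := ⟨2, two_mem_I2 G⟩

/-- `g - 1` as an element of `(I,2)`. -/
noncomputable def gm1 (g : G) : ↥((I2 G).restrictScalars ℤ) :=
  ⟨MonoidAlgebra.of ℤ G g - 1, of_sub_one_mem_I2 G g⟩

/-- `g - 1` as an element of the augmentation ideal `I`. -/
noncomputable def gm1I (g : G) : ↥((augI G).restrictScalars ℤ) :=
  ⟨MonoidAlgebra.of ℤ G g - 1, of_sub_one_mem_augI G g⟩

/-- The norm element as an element of `(I,2)` (for `G` of even order). -/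
noncomputable def NeltI2 [Fintype G] (h : Even (Fintype.card G)) :
    ↥((I2 G).restrictScalars ℤ) := ⟨Nelt G, N_mem_I2 G h⟩

/-- The norm element as an element of `(N,2)`. -/
noncomputable def NeltN2 [Fintype G] : ↥((N2 G).restrictScalars ℤ) := ⟨Nelt G, N_mem_N2 G⟩

end GroupRing

/-!
Write `V = (ℤG/N) ⊗ (I,2)` and `w = [1 ⊗ N]`. Since `[g ⊗ y] = [1 ⊗ g⁻¹y]` in the coinvariants,
every class is `[1 ⊗ x]` with `x ∈ (I,2)`, and its norm is `∑_g g ⊗ gx`. Reading off the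
coefficients of `g` and `1` in the first factor (well defined modulo `N`, whose coefficients are
constant) shows that this norm vanishes only if `gx = x` for all `g`, i.e. `x ∈ ℤN`; hence the
kernel is generated by `w`, which does lie in it because `∑_g g ⊗ N = N ⊗ N = 0`.
Moreover `2w = ∑_g [1 ⊗ 2g] = ∑_g [g⁻¹ ⊗ 2] = [N ⊗ 2] = 0`. Finally `w ≠ 0`: the pairing
`[r] ⊗ x ↦ ∑_g r(g) x(g) mod 2` is `G`-invariant, is well defined on `ℤG/N` because
`⟨N, x⟩ = ε(x)` is even for `x ∈ (I,2)`, and takes the value `1` on `w`.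
-/

open MonoidAlgebra

namespace Coinv

variable {G : Type*} [Group G] {V : Type*} [AddCommGroup V] [Module ℤ V]
  (ρ : Representation ℤ G V)

lemma mk_apply (g : G) (v : V) :
    (Submodule.Quotient.mk (ρ g v) : Coinv ρ) = Submodule.Quotient.mk v :=
  (Submodule.Quotient.eq _).2 (Submodule.subset_span ⟨(g, v), rfl⟩)

/-- The quotient module structure is named explicitly, as in `normBar`: instance search would
pick `AddCommGroup.toIntModule` instead. -/
noncomputable def lift {M : Type*} [AddCommGroup M] [Module ℤ M] (f : V →ₗ[ℤ] M)
    (hf : ∀ g v, f (ρ g v) = f v) :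
    @LinearMap ℤ ℤ _ _ (RingHom.id ℤ) (Coinv ρ) M _ _ (Submodule.Quotient.module (coinvRel ρ)) _ :=
  (coinvRel ρ).liftQ f <| Submodule.span_le.2 <| by
    rintro _ ⟨⟨g, v⟩, rfl⟩
    simp [hf]

end Coinv

lemma Coinv.mk_tmul_apply {G : Type*} [Group G] {V W : Type*} [AddCommGroup V] [AddCommGroup W]
    (ρ : Representation ℤ G V) (σ : Representation ℤ G W) (g : G) (a : V) (b : W) :
    (Submodule.Quotient.mk (a ⊗ₜ[ℤ] σ g b) : Coinv (ρ.tprod σ)) =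
      Submodule.Quotient.mk (ρ g⁻¹ a ⊗ₜ[ℤ] b) := by
  have h : ρ.tprod σ g (ρ g⁻¹ a ⊗ₜ[ℤ] b) = a ⊗ₜ[ℤ] σ g b := by
    simp [Representation.tprod_apply, ← Module.End.mul_apply, ← map_mul]
  rw [← h]
  exact Coinv.mk_apply _ _ _

lemma normMap_tprod_tmul {G : Type*} [Group G] [Fintype G] {V W : Type*} [AddCommGroup V]
    [AddCommGroup W] (ρ : Representation ℤ G V) (σ : Representation ℤ G W) (a : V) (b : W) :
    normMap (ρ.tprod σ) (a ⊗ₜ[ℤ] b) = ∑ g : G, ρ g a ⊗ₜ[ℤ] σ g b := by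
  simp [normMap, Representation.tprod_apply]

lemma Submodule.nonempty_span_singleton_addEquiv_zmod_two {M : Type*} [AddCommGroup M]
    [Module ℤ M] {w : M} (hw : w + w = 0) {ψ : M →ₗ[ℤ] ZMod 2} (hψ : ψ w = 1) :
    Nonempty (span ℤ {w} ≃+ ZMod 2) := by
  refine ⟨AddEquiv.ofBijective (ψ.domRestrict (span ℤ {w})).toAddMonoidHom ⟨?_, fun z => ?_⟩⟩
  · refine (injective_iff_map_eq_zero _).2 ?_
    rintro ⟨_, hc⟩ hψc
    obtain ⟨k, rfl⟩ := mem_span_singleton.1 hc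
    simp only [LinearMap.toAddMonoidHom_coe, LinearMap.domRestrict_apply, map_smul, hψ] at hψc
    obtain ⟨m, rfl⟩ := ZMod.intCast_eq_zero_iff_even.1 (by simpa using hψc)
    ext
    rw [Submodule.coe_mk, Submodule.coe_zero, add_smul, ← smul_add, hw, smul_zero]
  · refine ⟨⟨_, (span ℤ {w}).smul_mem (z.cast : ℤ) (mem_span_singleton_self w)⟩, ?_⟩
    simp [hψ]

section GroupRing

variable {G : Type*} [Group G]

lemma aug_single' (g : G) (c : ℤ) : aug G (single g c) = c := by
  simp [aug, lift_single]

lemma sum_coeff_eq_aug [Fintype G] (x : MonoidAlgebra ℤ G) : ∑ g, x.coeff g = aug G x := by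
  classical
  induction x using MonoidAlgebra.induction_linear with
  | zero => simp
  | add x y hx hy => simp [Finset.sum_add_distrib, hx, hy]
  | single g c => simp [coeff_single, Finsupp.single_apply, aug_single']

lemma coeff_of_mul (g : G) (r : MonoidAlgebra ℤ G) (h : G) :
    (of ℤ G g * r).coeff h = r.coeff (g⁻¹ * h) := by
  rw [of_apply, coeff_single_mul_apply, one_mul]

variable [Fintype G]

lemma coeff_Nelt (g : G) : (Nelt G).coeff g = 1 := by
  classical
  simp [Nelt, coeff_sum, Finsupp.single_apply]

lemma of_mul_Nelt (g : G) : of ℤ G g * Nelt G = Nelt G := by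
  simp only [Nelt, Finset.mul_sum, ← map_mul]
  exact Fintype.sum_bijective (g * ·) (Group.mulLeft_bijective g) _ _ fun _ => rfl

lemma mul_Nelt (s : MonoidAlgebra ℤ G) : s * Nelt G = aug G s • Nelt G := by
  induction s using MonoidAlgebra.induction_linear with
  | zero => simp
  | add s t hs ht => rw [add_mul, hs, ht, map_add, add_smul]
  | single g c => rw [aug_single', ← smul_of, smul_mul_assoc, of_mul_Nelt]

lemma coeff_mul_Nelt (s : MonoidAlgebra ℤ G) (g : G) : (s * Nelt G).coeff g = aug G s := by
  rw [mul_Nelt, coeff_smul_apply, coeff_Nelt, smul_eq_mul, mul_one]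

lemma eq_coeff_one_smul_Nelt {x : MonoidAlgebra ℤ G} (hx : ∀ g : G, of ℤ G g * x = x) :
    x = x.coeff 1 • Nelt G := by
  ext g
  rw [coeff_smul_apply, coeff_Nelt, smul_eq_mul, mul_one]
  calc x.coeff g = (of ℤ G g * x).coeff g := by rw [hx]
    _ = x.coeff 1 := by rw [coeff_of_mul, inv_mul_cancel]

end GroupRing

section Parity

variable {G : Type*} [Fintype G]

noncomputable def parityPairing : MonoidAlgebra ℤ G →ₗ[ℤ] MonoidAlgebra ℤ G →ₗ[ℤ] ZMod 2 :=
  LinearMap.mk₂ ℤ (fun r x => ∑ g, ((r.coeff g * x.coeff g : ℤ) : ZMod 2))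
    (by simp [add_mul, Finset.sum_add_distrib])
    (fun c r x => by
      simp only [coeff_smul_apply, smul_eq_mul]; push_cast; simp [Finset.mul_sum, mul_assoc])
    (by simp [mul_add, Finset.sum_add_distrib])
    (fun c r x => by
      simp only [coeff_smul_apply, smul_eq_mul]; push_cast; simp [Finset.mul_sum, mul_left_comm])

lemma parityPairing_apply (r x : MonoidAlgebra ℤ G) :
    parityPairing r x = ∑ g, ((r.coeff g * x.coeff g : ℤ) : ZMod 2) := rfl

variable [Group G]

lemma parityPairing_of_mul (g : G) (r x : MonoidAlgebra ℤ G) :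
    parityPairing (of ℤ G g * r) (of ℤ G g * x) = parityPairing r x := by
  simp only [parityPairing_apply, coeff_of_mul]
  exact Fintype.sum_bijective (g⁻¹ * ·) (Group.mulLeft_bijective g⁻¹) _ _ fun _ => rfl

lemma parityPairing_mul_Nelt (s x : MonoidAlgebra ℤ G) :
    parityPairing (s * Nelt G) x = ((aug G s * aug G x : ℤ) : ZMod 2) := by
  simp only [parityPairing_apply, coeff_mul_Nelt, ← Int.cast_sum, ← Finset.mul_sum,
    sum_coeff_eq_aug]

end Parity

section QuotientTensorIdeal

variable {G : Type*} [Group G] [Fintype G] (J : Ideal (MonoidAlgebra ℤ G))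

lemma mk_Nelt_eq_zero :
    (Submodule.Quotient.mk (Nelt G) : MonoidAlgebra ℤ G ⧸ (NIdeal G).restrictScalars ℤ) = 0 :=
  (Submodule.Quotient.mk_eq_zero _).2 (Ideal.mem_span_singleton_self _)

lemma quotNRep_mk (g : G) (r : MonoidAlgebra ℤ G) :
    quotNRep G g (Submodule.Quotient.mk r) = Submodule.Quotient.mk (of ℤ G g * r) := rfl

lemma exists_mk_eq_mk_one_tmul (v : (MonoidAlgebra ℤ G ⧸ (NIdeal G).restrictScalars ℤ) ⊗[ℤ]
    J.restrictScalars ℤ) :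
    ∃ x, (Submodule.Quotient.mk v : Coinv ((quotNRep G).tprod (idealRep G J))) =
      Submodule.Quotient.mk (Submodule.Quotient.mk (1 : MonoidAlgebra ℤ G) ⊗ₜ[ℤ] x) := by
  let S := LinearMap.range ((coinvRel ((quotNRep G).tprod (idealRep G J))).mkQ ∘ₗ
    TensorProduct.mk ℤ _ (J.restrictScalars ℤ) (Submodule.Quotient.mk (1 : MonoidAlgebra ℤ G)))
  suffices Submodule.Quotient.mk v ∈ S by
    obtain ⟨x, hx⟩ := this
    exact ⟨x, hx.symm⟩
  induction v using TensorProduct.induction_on with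
  | zero => exact S.zero_mem
  | add v w hv hw => exact S.add_mem hv hw
  | tmul a y =>
    obtain ⟨r, rfl⟩ := Submodule.Quotient.mk_surjective _ a
    induction r using MonoidAlgebra.induction_linear with
    | zero => simp
    | add r s hr hs =>
      rw [Submodule.Quotient.mk_add, TensorProduct.add_tmul]
      exact S.add_mem hr hs
    | single g c =>
      rw [← smul_of, Submodule.Quotient.mk_smul, ← TensorProduct.smul_tmul',
        Submodule.Quotient.mk_smul]
      refine S.smul_mem c ⟨idealRep G J g⁻¹ y, ?_⟩
      change Submodule.Quotient.mk (_ ⊗ₜ[ℤ] idealRep G J g⁻¹ y) = _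
      rw [Coinv.mk_tmul_apply, inv_inv, quotNRep_mk, mul_one]

lemma sum_mk_of_eq_zero :
    ∑ g, (Submodule.Quotient.mk (of ℤ G g) : MonoidAlgebra ℤ G ⧸ (NIdeal G).restrictScalars ℤ)
      = 0 := by
  rw [← mk_Nelt_eq_zero, Nelt, ← Submodule.mkQ_apply, map_sum]
  rfl

lemma sum_mk_one_tmul_apply_eq_zero (x : J.restrictScalars ℤ) :
    ∑ g, (Submodule.Quotient.mk (Submodule.Quotient.mk (1 : MonoidAlgebra ℤ G) ⊗ₜ[ℤ]
      idealRep G J g x) : Coinv ((quotNRep G).tprod (idealRep G J))) = 0 :=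
  calc _ = ∑ g : G, (Submodule.Quotient.mk (Submodule.Quotient.mk (of ℤ G g⁻¹) ⊗ₜ[ℤ] x) :
        Coinv ((quotNRep G).tprod (idealRep G J))) := by
        simp only [Coinv.mk_tmul_apply, quotNRep_mk, mul_one]
    _ = Submodule.Quotient.mk ((∑ g : G, Submodule.Quotient.mk (of ℤ G g⁻¹)) ⊗ₜ[ℤ] x) := by
        rw [TensorProduct.sum_tmul, ← Submodule.mkQ_apply, map_sum]
        rfl
    _ = 0 := by
        rw [(Fintype.sum_bijective _ inv_involutive.bijective _ _ fun _ => rfl).trans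
          sum_mk_of_eq_zero, TensorProduct.zero_tmul]
        rfl

noncomputable def coeffDiff (g : G) :
    (MonoidAlgebra ℤ G ⧸ (NIdeal G).restrictScalars ℤ) →ₗ[ℤ] ℤ :=
  Submodule.liftQ _ ((basis G ℤ).coord g - (basis G ℤ).coord 1) <| by
    intro r hr
    obtain ⟨s, rfl⟩ := Ideal.mem_span_singleton'.1 hr
    show (s * Nelt G).coeff g - (s * Nelt G).coeff 1 = 0
    rw [coeff_mul_Nelt, coeff_mul_Nelt, sub_self]

lemma coeffDiff_mk (g : G) (r : MonoidAlgebra ℤ G) :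
    coeffDiff g (Submodule.Quotient.mk r) = r.coeff g - r.coeff 1 := rfl

lemma of_mul_eq_self_of_normMap_one_tmul_eq_zero {x : J.restrictScalars ℤ}
    (hx : normMap ((quotNRep G).tprod (idealRep G J))
      (Submodule.Quotient.mk (1 : MonoidAlgebra ℤ G) ⊗ₜ[ℤ] x) = 0) (g : G) :
    of ℤ G g * x = x := by
  classical
  let D := TensorProduct.lift ((LinearMap.lsmul ℤ (J.restrictScalars ℤ)).comp (coeffDiff g))
  have h := congrArg D hx
  rw [normMap_tprod_tmul, map_sum, map_zero] at h
  have hterm : ∀ h : G, D (quotNRep G h (Submodule.Quotient.mk 1) ⊗ₜ[ℤ] idealRep G J h x) =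
      (if h = g then idealRep G J h x else 0) - (if h = 1 then idealRep G J h x else 0) := by
    intro h
    simp [D, quotNRep_mk, coeffDiff_mk, of_apply, coeff_single, Finsupp.single_apply]
  simp only [hterm, Finset.sum_sub_distrib, Finset.sum_ite_eq', Finset.mem_univ, if_true,
    sub_eq_zero, map_one] at h
  exact congrArg Subtype.val h

end QuotientTensorIdeal

section TateHomology

variable {G : Type*} [Group G] [Fintype G]

noncomputable def coinvParity : Coinv ((quotNRep G).tprod (idealRep G (I2 G))) →ₗ[ℤ] ZMod 2 :=
  Coinv.lift _ (TensorProduct.lift <| ((NIdeal G).restrictScalars ℤ).liftQ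
    (parityPairing.compl₂ ((I2 G).restrictScalars ℤ).subtype) fun r hr => by
      obtain ⟨s, rfl⟩ := Ideal.mem_span_singleton'.1 hr
      ext ⟨x, hx⟩
      simp only [LinearMap.compl₂_apply, Submodule.subtype_apply, parityPairing_mul_Nelt,
        Int.cast_mul]
      rw [show ((aug G x : ℤ) : ZMod 2) = 0 from hx, mul_zero]
      rfl) fun g v => by
    induction v using TensorProduct.induction_on with
    | zero => simp
    | add v w hv hw => rw [map_add, map_add, hv, hw, map_add]
    | tmul a x =>
      obtain ⟨r, rfl⟩ := Submodule.Quotient.mk_surjective _ a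
      exact parityPairing_of_mul g r x

lemma coinvParity_mk_one_tmul_Nelt (h : Even (Fintype.card G)) :
    coinvParity (Submodule.Quotient.mk
      (Submodule.Quotient.mk (1 : MonoidAlgebra ℤ G) ⊗ₜ[ℤ] NeltI2 G h)) = 1 := by
  classical
  show parityPairing 1 (Nelt G) = 1
  simp [parityPairing_apply, coeff_Nelt, one_def, coeff_single, Finsupp.single_apply]

lemma normMap_one_tmul_Nelt (h : Even (Fintype.card G)) :
    normMap ((quotNRep G).tprod (idealRep G (I2 G)))
      (Submodule.Quotient.mk (1 : MonoidAlgebra ℤ G) ⊗ₜ[ℤ] NeltI2 G h) = 0 := by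
  have hN : ∀ g, idealRep G (I2 G) g (NeltI2 G h) = NeltI2 G h :=
    fun g => Subtype.ext (of_mul_Nelt g)
  simp only [normMap_tprod_tmul, hN, quotNRep_mk, mul_one, ← TensorProduct.sum_tmul,
    sum_mk_of_eq_zero, TensorProduct.zero_tmul]

lemma mk_one_tmul_Nelt_add_self (h : Even (Fintype.card G)) :
    (Submodule.Quotient.mk (Submodule.Quotient.mk (1 : MonoidAlgebra ℤ G) ⊗ₜ[ℤ] NeltI2 G h) :
      Coinv ((quotNRep G).tprod (idealRep G (I2 G)))) +
      Submodule.Quotient.mk (Submodule.Quotient.mk (1 : MonoidAlgebra ℤ G) ⊗ₜ[ℤ] NeltI2 G h) =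
      0 := by
  have hN : NeltI2 G h + NeltI2 G h = ∑ g, idealRep G (I2 G) g (twoI2 G) := by
    apply Subtype.ext
    rw [Submodule.coe_add, Submodule.coe_sum]
    change Nelt G + Nelt G = ∑ g, of ℤ G g * 2
    rw [← Finset.sum_mul, mul_two]
    rfl
  rw [← Submodule.Quotient.mk_add, ← TensorProduct.tmul_add, hN, TensorProduct.tmul_sum,
    ← Submodule.mkQ_apply, map_sum]
  exact sum_mk_one_tmul_apply_eq_zero _ _

lemma ker_normBar_le_span (h : Even (Fintype.card G)) :
    LinearMap.ker (normBar ((quotNRep G).tprod (idealRep G (I2 G)))) ≤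
      Submodule.span ℤ {Submodule.Quotient.mk
        (Submodule.Quotient.mk (1 : MonoidAlgebra ℤ G) ⊗ₜ[ℤ] NeltI2 G h)} := by
  intro c hc
  obtain ⟨v, rfl⟩ := Submodule.Quotient.mk_surjective _ c
  obtain ⟨x, hx⟩ := exists_mk_eq_mk_one_tmul (I2 G) v
  rw [hx] at hc ⊢
  have hNx : x = (x : MonoidAlgebra ℤ G).coeff 1 • NeltI2 G h :=
    Subtype.ext (eq_coeff_one_smul_Nelt (of_mul_eq_self_of_normMap_one_tmul_eq_zero _ hc))
  rw [hNx, TensorProduct.tmul_smul, Submodule.Quotient.mk_smul]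
  exact Submodule.smul_mem _ _ (Submodule.mem_span_singleton_self _)

end TateHomology

/-- For a finite group `G` of even order, the Tate homology group
`Ĥ₀(G; (ℤG/N) ⊗_ℤ (I,2))` (the kernel of the norm map on the coinvariants, with the diagonal
`G`-action on the tensor product) is cyclic of order `2`, generated by the class of `1 ⊗ N`. -/
theorem stmt6 {G : Type*} [Group G] [Fintype G] (h : Even (Fintype.card G)) :
    Nonempty (↥(LinearMap.ker (normBar ((quotNRep G).tprod (idealRep G (I2 G))))) ≃+ ZMod 2) ∧
    LinearMap.ker (normBar ((quotNRep G).tprod (idealRep G (I2 G)))) =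
      Submodule.span ℤ
        {(Submodule.Quotient.mk
            ((Submodule.Quotient.mk (1 : MonoidAlgebra ℤ G)) ⊗ₜ[ℤ] (NeltI2 G h)) :
          Coinv ((quotNRep G).tprod (idealRep G (I2 G))))} := by
  have hker := (ker_normBar_le_span h).antisymm <| Submodule.span_le.2 <|
    Set.singleton_subset_iff.2 (normMap_one_tmul_Nelt h)
  obtain ⟨e⟩ := Submodule.nonempty_span_singleton_addEquiv_zmod_two
    (mk_one_tmul_Nelt_add_self h) (coinvParity_mk_one_tmul_Nelt h)
  exact ⟨⟨(LinearEquiv.ofEq _ _ hker).toAddEquiv.trans e⟩, hker⟩
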